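/- arXiv:1801.03337 — 2 statements merged into one kernel-verified Lean document; each statement's English description precedes it below -/
import Mathlib

section
/- With S_{r,s} := E[a,...,a (r times), b,...,b (s times)] for distinct nonzero a, b ∈ F_2^n and l = 2^n, for integers r ≥ 0 and s ≥ 2 one has S_{r,s} ≤ 2(s-1)(l + 2r)·S_{r,s-2} + 4r(r-1)·S_{r-2,s}. -/
open Finset

noncomputable def ev (n : ℕ) (X : ((Fin n → ZMod 2) → ZMod 2) → ℝ) : ℝ :=
  (∑ f : (Fin n → ZMod 2) → ZMod 2, X f) / Fintype.card ((Fin n → ZMod 2) → ZMod 2)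

/-- `E[a_1,…,a_m] = Σ_{x_1,…,x_m} E[∏ f̃(x_i)f̃(x_i+a_i)]`. -/
noncomputable def Efun (n : ℕ) {m : ℕ} (a : Fin m → (Fin n → ZMod 2)) : ℝ :=
  ∑ x : Fin m → (Fin n → ZMod 2),
    ev n (fun f => ∏ i, (-1 : ℝ) ^ (f (x i)).val * (-1 : ℝ) ^ (f (x i + a i)).val)

/-- `S_{r,s} = E[a,…,a (r times), b,…,b (s times)]`. -/
noncomputable def S (n : ℕ) (a b : Fin n → ZMod 2) (r s : ℕ) : ℝ :=
  Efun n (fun i : Fin (r + s) => if (i : ℕ) < r then a else b)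


abbrev Gn (n : ℕ) := Fin n → ZMod 2

def dd {n : ℕ} (u p : Gn n) : ZMod 2 := if u = p then 1 else 0

def Mw {n r s : ℕ} (a b : Gn n) (x : Fin r → Gn n) (y : Fin s → Gn n) (p : Gn n) : ZMod 2 :=
  (∑ i, (dd (x i) p + dd (x i + a) p)) + (∑ j, (dd (y j) p + dd (y j + b) p))

def Ok {n r s : ℕ} (a b : Gn n) (x : Fin r → Gn n) (y : Fin s → Gn n) : Prop :=
  ∀ p, Mw a b x y p = 0

instance {n r s : ℕ} (a b : Gn n) (x : Fin r → Gn n) (y : Fin s → Gn n) :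
    Decidable (Ok a b x y) := Fintype.decidableForallFintype

def cnt (n r s : ℕ) (a b : Gn n) : ℕ :=
  (univ.filter fun xy : (Fin r → Gn n) × (Fin s → Gn n) => Ok a b xy.1 xy.2).card

noncomputable def chi (c : ZMod 2) : ℝ := (-1 : ℝ) ^ c.val

lemma zmod2_cases (c : ZMod 2) : c = 0 ∨ c = 1 := by revert c; decide

lemma chi_zero : chi 0 = 1 := by norm_num [chi]

lemma chi_add (c d : ZMod 2) : chi (c + d) = chi c * chi d := by
  rcases zmod2_cases c with rfl | rfl <;> rcases zmod2_cases d with rfl | rfl <;>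
    norm_num [chi, show ((1:ZMod 2)+1) = 0 from rfl, show ZMod.val (2:ZMod 2) = 0 from rfl, show ZMod.val (1:ZMod 2) = 1 from rfl]

lemma chi_sum {ι : Type*} (s : Finset ι) (g : ι → ZMod 2) :
    ∏ i ∈ s, chi (g i) = chi (∑ i ∈ s, g i) := by
  classical
  induction s using Finset.induction_on with
  | empty => simp [chi_zero]
  | insert h ih => simp_all [chi_add]


lemma chi_one : chi 1 = -1 := by norm_num [chi, show ZMod.val (1:ZMod 2) = 1 from rfl]

lemma ev_eq {n m : ℕ} (t α : Fin m → Gn n) :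
    ev n (fun f => ∏ i, (-1:ℝ) ^ (f (t i)).val * (-1:ℝ) ^ (f (t i + α i)).val)
    = if (∀ p : Gn n, (∑ i, (dd (t i) p + dd (t i + α i) p)) = 0) then 1 else 0 := by
  set M : Gn n → ZMod 2 := fun p => ∑ i, (dd (t i) p + dd (t i + α i) p) with hM
  have hdd : ∀ (f : Gn n → ZMod 2) (u : Gn n), (∑ p, dd u p * f p) = f u := by
    intro f u
    simp [dd, ite_mul, Finset.sum_ite_eq]
  have key : ∀ f : Gn n → ZMod 2,
      (∏ i, (-1:ℝ) ^ (f (t i)).val * (-1:ℝ) ^ (f (t i + α i)).val)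
      = chi (∑ p, M p * f p) := by
    intro f
    calc (∏ i, (-1:ℝ) ^ (f (t i)).val * (-1:ℝ) ^ (f (t i + α i)).val)
        = ∏ i, chi (f (t i) + f (t i + α i)) := by
          simp only [chi_add]; rfl
      _ = chi (∑ i, (f (t i) + f (t i + α i))) := chi_sum _ _
      _ = chi (∑ p, M p * f p) := by
          congr 1
          rw [hM]
          simp only [add_mul, Finset.sum_add_distrib, Finset.sum_mul]
          rw [Finset.sum_comm, Finset.sum_comm (γ := Gn n)]
          simp [hdd]
  have hcard : (0:ℝ) < (Fintype.card (Gn n → ZMod 2) : ℝ) := by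
    exact_mod_cast Fintype.card_pos
  unfold ev
  simp only [key]
  by_cases hall : ∀ p, M p = 0
  · rw [if_pos hall]
    have : ∀ f : Gn n → ZMod 2, chi (∑ p, M p * f p) = 1 := by
      intro f
      have : (∑ p, M p * f p) = 0 := Finset.sum_eq_zero (fun p _ => by rw [hall p, zero_mul])
      rw [this, chi_zero]
    simp only [this, Finset.sum_const, nsmul_eq_mul, mul_one]
    field_simp
    rw [Finset.card_univ]
  · rw [if_neg hall]
    push_neg at hall
    obtain ⟨p0, hp0⟩ := hall
    have hone : M p0 = 1 := (zmod2_cases (M p0)).resolve_left hp0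
    have hδ : ∀ f : Gn n → ZMod 2, (∑ p, M p * dd p0 p) = M p0 := by
      intro f; simp [dd, mul_ite, Finset.sum_ite_eq]
    have hshift : (∑ f : Gn n → ZMod 2, chi (∑ p, M p * f p))
        = ∑ f : Gn n → ZMod 2, chi (∑ p, M p * (f p + dd p0 p)) := by
      refine (Fintype.sum_equiv (Equiv.addRight (fun p => dd p0 p)) _ _ (fun f => ?_)).symm
      rfl
    have hval : ∀ f : Gn n → ZMod 2,
        chi (∑ p, M p * (f p + dd p0 p)) = - chi (∑ p, M p * f p) := by
      intro f
      have : (∑ p, M p * (f p + dd p0 p)) = (∑ p, M p * f p) + 1 := by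
        simp only [mul_add, Finset.sum_add_distrib]
        rw [hδ f, hone]
      rw [this, chi_add, chi_one]; ring
    have hzero : (∑ f : Gn n → ZMod 2, chi (∑ p, M p * f p)) = 0 := by
      have h2 := hshift
      simp only [hval, Finset.sum_neg_distrib] at h2
      linarith [h2]
    rw [hzero, zero_div]


lemma Q_iff {n r s : ℕ} (a b : Gn n) (t : Fin (r+s) → Gn n) :
    (∀ p : Gn n, (∑ i : Fin (r+s),
        (dd (t i) p + dd (t i + (if (i:ℕ) < r then a else b)) p)) = 0)
    ↔ Ok a b (fun i => t (Fin.castAdd s i)) (fun j => t (Fin.natAdd r j)) := by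
  unfold Ok Mw
  apply forall_congr'
  intro p
  rw [Fin.sum_univ_add]
  simp [Fin.is_lt, Nat.not_lt, Nat.le_add_right]

lemma S_eq_cnt (n : ℕ) (a b : Gn n) (r s : ℕ) : S n a b r s = cnt n r s a b := by
  unfold S Efun
  simp only [ev_eq]
  rw [Finset.sum_boole]
  norm_cast
  unfold cnt
  apply Finset.card_bij'
    (i := fun t _ => ((fun i => t (Fin.castAdd s i), fun j => t (Fin.natAdd r j)) :
        (Fin r → Gn n) × (Fin s → Gn n)))
    (j := fun xy _ => Fin.addCases xy.1 xy.2)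
  · intro t ht
    funext i
    induction i using Fin.addCases with
    | left i => simp [Fin.addCases_left]
    | right j => simp [Fin.addCases_right]
  · intro xy hxy
    ext i <;> simp [Fin.addCases_left, Fin.addCases_right]
  · intro t ht
    simp only [Finset.mem_filter, Finset.mem_univ, true_and] at ht ⊢
    exact (Q_iff a b t).mp ht
  · intro xy hxy
    simp only [Finset.mem_filter, Finset.mem_univ, true_and] at hxy ⊢
    rw [Q_iff]
    simpa [Fin.addCases_left, Fin.addCases_right] using hxy

lemma gadd_self {n : ℕ} (g : Gn n) : g + g = 0 := by
  funext i
  show g i + g i = 0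
  rcases zmod2_cases (g i) with h | h <;> rw [h] <;> decide

lemma dd_self {n : ℕ} (u : Gn n) : dd u u = 1 := by simp [dd]

lemma dd_ne {n : ℕ} {u p : Gn n} (h : u ≠ p) : dd u p = 0 := by simp [dd, h]

lemma zmod2_add_one (u v : ZMod 2) (h : u + v = 1) : u = 1 ∨ v = 1 := by
  revert h; revert u v; decide

lemma sumNeZeroExists {ι : Type*} [Fintype ι] {c : ι → ZMod 2}
    (h : (∑ i, c i) ≠ 0) : ∃ i, c i ≠ 0 := by
  by_contra hc
  push_neg at hc
  exact h (Finset.sum_eq_zero fun i _ => hc i)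

lemma dd_pair_ne_zero {n : ℕ} {u v p : Gn n} (h : dd u p + dd v p ≠ 0) :
    u = p ∨ v = p := by
  by_contra hc
  push_neg at hc
  rw [dd_ne hc.1, dd_ne hc.2] at h
  exact h (by norm_num)

lemma add_ne_self {n : ℕ} {g u : Gn n} (h : u ≠ 0) : g + u ≠ g := by
  intro hc
  apply h
  have h2 : g + u = g + 0 := by rw [add_zero]; exact hc
  exact add_left_cancel h2

lemma cover {n r s' : ℕ} {a b : Gn n} (ha : a ≠ 0) (hb : b ≠ 0) (hab : a ≠ b)
    (x : Fin r → Gn n) (y : Fin (s'+2) → Gn n) (h : Ok a b x y) :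
    (∃ j : Fin (s'+1), y (Fin.castSucc j) = y (Fin.last (s'+1)) ∨
        y (Fin.castSucc j) = y (Fin.last (s'+1)) + b)
    ∨ (∃ i i' : Fin r, i ≠ i' ∧
        (x i = y (Fin.last (s'+1)) ∨ x i = y (Fin.last (s'+1)) + a)
        ∧ (x i' = y (Fin.last (s'+1)) + b ∨ x i' = y (Fin.last (s'+1)) + a + b)) := by
  set q := y (Fin.last (s'+1)) with hq
  -- step 1 : analyze multiplicity of q
  have h1 := h q
  unfold Mw at h1
  rw [Fin.sum_univ_castSucc (f := fun j => dd (y j) q + dd (y j + b) q)] at h1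
  rw [← hq, dd_self, dd_ne (add_ne_self hb)] at h1
  have h1' : (∑ i, (dd (x i) q + dd (x i + a) q)) +
      (∑ j : Fin (s'+1), (dd (y (Fin.castSucc j)) q + dd (y (Fin.castSucc j) + b) q)) = 1 := by
    have : ∀ u v : ZMod 2, u + (v + (1 + 0)) = 0 → u + v = 1 := by decide
    exact this _ _ h1
  rcases zmod2_add_one _ _ h1' with hA | hB
  · -- some x i hits q : look at q + b
    have hA' : (∑ i, (dd (x i) q + dd (x i + a) q)) ≠ 0 := by rw [hA]; norm_num
    obtain ⟨i, hi⟩ := sumNeZeroExists hA'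
    have hxi : x i = q ∨ x i = q + a := by
      rcases dd_pair_ne_zero hi with h' | h'
      · exact Or.inl h'
      · right; rw [← h']; rw [add_assoc, gadd_self, add_zero]
    -- multiplicity of q + b
    have h2 := h (q + b)
    unfold Mw at h2
    rw [Fin.sum_univ_castSucc (f := fun j => dd (y j) (q+b) + dd (y j + b) (q+b))] at h2
    rw [← hq, dd_self, dd_ne (Ne.symm (add_ne_self hb))] at h2
    have h2' : (∑ i, (dd (x i) (q+b) + dd (x i + a) (q+b))) +
        (∑ j : Fin (s'+1), (dd (y (Fin.castSucc j)) (q+b) + dd (y (Fin.castSucc j) + b) (q+b))) = 1 := by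
      have : ∀ u v : ZMod 2, u + (v + (0 + 1)) = 0 → u + v = 1 := by decide
      exact this _ _ h2
    rcases zmod2_add_one _ _ h2' with hA2 | hB2
    · -- case 2
      have hA2' : (∑ i, (dd (x i) (q+b) + dd (x i + a) (q+b))) ≠ 0 := by rw [hA2]; norm_num
      obtain ⟨i', hi'⟩ := sumNeZeroExists hA2'
      have hxi' : x i' = q + b ∨ x i' = q + a + b := by
        rcases dd_pair_ne_zero hi' with h' | h'
        · exact Or.inl h'
        · right
          have : x i' = q + b + a := by
            rw [← h', add_assoc, gadd_self, add_zero]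
          rw [this]; abel
      refine Or.inr ⟨i, i', ?_, hxi, hxi'⟩
      intro hii
      subst hii
      rcases hxi with h3 | h3 <;> rcases hxi' with h4 | h4 <;> rw [h3] at h4
      · refine absurd ?_ hb
        have h5 : q + 0 = q + b := by rw [add_zero]; exact h4
        exact (add_left_cancel h5).symm
      · exact hab (by
          have h5 : q + 0 = q + (a + b) := by rw [add_zero, ← add_assoc]; exact h4
          have h6 : (0 : Gn n) = a + b := add_left_cancel h5
          have : a + (a + b) = a + 0 := by rw [← h6, add_zero]
          have h7 : a + a + b = a := by rw [add_assoc]; rw [this, add_zero]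
          rw [gadd_self, zero_add] at h7; exact h7.symm)
      · exact hab (add_left_cancel h4)
      · exact hb (by
          have h5 : q + (a + 0) = q + (a + b) := by
            rw [add_zero, ← add_assoc]; exact h4
          exact (add_left_cancel (add_left_cancel h5)).symm)
    · -- y side at q + b : still case 1
      have hB2' : (∑ j : Fin (s'+1), (dd (y (Fin.castSucc j)) (q+b) + dd (y (Fin.castSucc j) + b) (q+b))) ≠ 0 := by
        rw [hB2]; norm_num
      obtain ⟨j, hj⟩ := sumNeZeroExists hB2'
      rcases dd_pair_ne_zero hj with h' | h'
      · exact Or.inl ⟨j, Or.inr h'⟩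
      · left; refine ⟨j, Or.inl ?_⟩
        have := add_right_cancel (b := b) h'
        exact this
  · -- case 1 directly
    have hB' : (∑ j : Fin (s'+1), (dd (y (Fin.castSucc j)) q + dd (y (Fin.castSucc j) + b) q)) ≠ 0 := by
      rw [hB]; norm_num
    obtain ⟨j, hj⟩ := sumNeZeroExists hB'
    rcases dd_pair_ne_zero hj with h' | h'
    · exact Or.inl ⟨j, Or.inl h'⟩
    · left; refine ⟨j, Or.inr ?_⟩
      rw [← h', add_assoc, gadd_self, add_zero]

lemma zself (u : ZMod 2) : u + u = 0 := by fin_cases u <;> decide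

lemma bound1 {n r s' : ℕ} (a b : Gn n) (hb : b ≠ 0) (j : Fin (s'+1)) :
    ((univ.filter fun xy : (Fin r → Gn n) × (Fin (s'+2) → Gn n) =>
      Ok a b xy.1 xy.2 ∧ (xy.2 (Fin.castSucc j) = xy.2 (Fin.last (s'+1)) ∨
        xy.2 (Fin.castSucc j) = xy.2 (Fin.last (s'+1)) + b)).card)
    ≤ 2^n * (2 * cnt n r s' a b) := by
  classical
  have hcard : ((univ : Finset (Gn n)) ×ˢ (univ : Finset Bool) ×ˢ
      (univ.filter fun xy : (Fin r → Gn n) × (Fin s' → Gn n) => Ok a b xy.1 xy.2)).card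
      = 2^n * (2 * cnt n r s' a b) := by
    rw [Finset.card_product, Finset.card_product]
    simp [cnt, Fintype.card_fun]
  rw [← hcard]
  apply Finset.card_le_card_of_injOn
    (fun xy => (xy.2 (Fin.last (s'+1)),
      decide (xy.2 (Fin.castSucc j) = xy.2 (Fin.last (s'+1)) + b),
      (xy.1, fun k : Fin s' => xy.2 (Fin.castSucc (j.succAbove k)))))
  · rintro ⟨x, y⟩ hxy
    simp only [Finset.mem_coe, Finset.mem_filter, Finset.mem_univ, true_and] at hxy
    obtain ⟨hok, hcond⟩ := hxy
    simp only [Finset.mem_coe, Finset.mem_product, Finset.mem_univ, Finset.mem_filter, true_and]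
    intro p
    have pairEq : dd (y (Fin.castSucc j)) p + dd (y (Fin.castSucc j) + b) p
        = dd (y (Fin.last (s'+1))) p + dd (y (Fin.last (s'+1)) + b) p := by
      rcases hcond with hc | hc
      · rw [hc]
      · rw [hc, add_assoc, gadd_self, add_zero, add_comm]
    have h1p := hok p
    unfold Mw at h1p ⊢
    rw [Fin.sum_univ_castSucc (f := fun w => dd (y w) p + dd (y w + b) p)] at h1p
    rw [Fin.sum_univ_succAbove
      (fun w : Fin (s'+1) => dd (y (Fin.castSucc w)) p + dd (y (Fin.castSucc w) + b) p) j] at h1p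
    rw [pairEq] at h1p
    have hK : ∀ L K X : ZMod 2, X + ((L + K) + L) = X + K := by
      intro L K X
      rw [add_comm L K, add_assoc, zself, add_zero]
    rw [hK] at h1p
    exact h1p
  · rintro ⟨x, y⟩ hu ⟨x', y'⟩ hv heq
    simp only [Finset.mem_coe, Finset.mem_filter, Finset.mem_univ, true_and] at hu hv
    simp only [Prod.mk.injEq] at heq
    obtain ⟨h1, h2, h3, h4⟩ := heq
    refine Prod.ext h3 ?_
    funext w
    induction w using Fin.lastCases with
    | last => exact h1
    | cast v =>
      show y (Fin.castSucc v) = y' (Fin.castSucc v)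
      by_cases hvj : v = j
      · subst hvj
        have hiff := decide_eq_decide.mp h2
        rcases hu.2 with hc | hc
        · have hnP : ¬ (y (Fin.castSucc v) = y (Fin.last (s'+1)) + b) := by
            rw [hc]; exact Ne.symm (add_ne_self hb)
          have hnQ := (not_iff_not.mpr hiff).mp hnP
          have hcv := hv.2.resolve_right hnQ
          rw [hc, hcv, h1]
        · have hQ := hiff.mp hc
          rw [hc, hQ, h1]
      · obtain ⟨k, hk⟩ := Fin.exists_succAbove_eq (show v ≠ j from hvj)
        rw [← hk]
        exact congrFun h4 k

lemma bound2 {n r'' s' : ℕ} (a b : Gn n) (ha : a ≠ 0) (i i' : Fin (r''+2)) (hii : i ≠ i') :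
    ((univ.filter fun xy : (Fin (r''+2) → Gn n) × (Fin (s'+2) → Gn n) =>
      Ok a b xy.1 xy.2 ∧
      (xy.1 i = xy.2 (Fin.last (s'+1)) ∨ xy.1 i = xy.2 (Fin.last (s'+1)) + a) ∧
      (xy.1 i' = xy.2 (Fin.last (s'+1)) + b ∨ xy.1 i' = xy.2 (Fin.last (s'+1)) + a + b)).card)
    ≤ 4 * cnt n r'' (s'+2) a b := by
  classical
  obtain ⟨i2, hi2⟩ := Fin.exists_succAbove_eq (show i' ≠ i from hii.symm)
  have hcard : ((univ : Finset Bool) ×ˢ (univ : Finset Bool) ×ˢ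
      (univ.filter fun xy : (Fin r'' → Gn n) × (Fin (s'+2) → Gn n) => Ok a b xy.1 xy.2)).card
      = 4 * cnt n r'' (s'+2) a b := by
    rw [Finset.card_product, Finset.card_product]
    simp [cnt]
    ring
  rw [← hcard]
  apply Finset.card_le_card_of_injOn
    (fun xy => (decide (xy.1 i = xy.2 (Fin.last (s'+1)) + a),
      decide (xy.1 i' = xy.2 (Fin.last (s'+1)) + a + b),
      ((fun k : Fin r'' => xy.1 (i.succAbove (i2.succAbove k))),
       Function.update xy.2 (Fin.last (s'+1)) (xy.2 (Fin.last (s'+1)) + a))))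
  · rintro ⟨x, y⟩ hxy
    simp only [Finset.mem_coe, Finset.mem_filter, Finset.mem_univ, true_and] at hxy
    obtain ⟨hok, hc1, hc2⟩ := hxy
    simp only [Finset.mem_coe, Finset.mem_product, Finset.mem_univ, Finset.mem_filter, true_and]
    intro p
    set q := y (Fin.last (s'+1)) with hq
    have hyn1 : ∀ w : Fin (s'+1),
        Function.update y (Fin.last (s'+1)) (q + a) (Fin.castSucc w) = y (Fin.castSucc w) :=
      fun w => Function.update_of_ne (Fin.castSucc_lt_last w).ne _ _
    have hyn2 : Function.update y (Fin.last (s'+1)) (q + a) (Fin.last (s'+1)) = q + a :=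
      Function.update_self _ _ _
    have hx1 : dd (x i) p + dd (x i + a) p = dd q p + dd (q + a) p := by
      rcases hc1 with hc | hc
      · rw [hc]
      · rw [hc, add_assoc, gadd_self, add_zero, add_comm]
    have hx2 : dd (x i') p + dd (x i' + a) p = dd (q + b) p + dd (q + a + b) p := by
      rcases hc2 with hc | hc
      · rw [hc]
        congr 2
        abel
      · rw [hc]
        have h5 : q + a + b + a = q + b := by
          rw [add_right_comm (q + a) b a, add_assoc q a a, gadd_self, add_zero]
        rw [h5, add_comm]
    have h1p := hok p
    unfold Mw at h1p ⊢
    rw [Fin.sum_univ_succAbove (fun w => dd (x w) p + dd (x w + a) p) i] at h1p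
    rw [Fin.sum_univ_succAbove
      (fun w : Fin (r''+1) => dd (x (i.succAbove w)) p + dd (x (i.succAbove w) + a) p) i2] at h1p
    rw [hi2] at h1p
    rw [Fin.sum_univ_castSucc (f := fun w => dd (y w) p + dd (y w + b) p)] at h1p
    rw [Fin.sum_univ_castSucc (f := fun w =>
      dd (Function.update y (Fin.last (s'+1)) (q + a) w) p
        + dd (Function.update y (Fin.last (s'+1)) (q + a) w + b) p)]
    simp only [hyn1, hyn2]
    rw [hx1, hx2] at h1p
    rw [← hq] at h1p
    have h2 : (2 : ZMod 2) = 0 := by decide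
    linear_combination h1p - (dd q p + dd (q + b) p) * h2
  · rintro ⟨x, y⟩ hu ⟨x', y'⟩ hv heq
    simp only [Finset.mem_coe, Finset.mem_filter, Finset.mem_univ, true_and] at hu hv
    simp only [Prod.mk.injEq] at heq
    obtain ⟨h1, h2, h3, h4⟩ := heq
    have hqeq : y (Fin.last (s'+1)) = y' (Fin.last (s'+1)) := by
      have := congrFun h4 (Fin.last (s'+1))
      rw [Function.update_self, Function.update_self] at this
      exact add_right_cancel this
    have hyeq : y = y' := by
      funext w
      induction w using Fin.lastCases with
      | last => exact hqeq
      | cast v =>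
        have := congrFun h4 (Fin.castSucc v)
        rwa [Function.update_of_ne (Fin.castSucc_lt_last v).ne,
          Function.update_of_ne (Fin.castSucc_lt_last v).ne] at this
    refine Prod.ext ?_ hyeq
    show x = x'
    funext w
    by_cases hwi : w = i
    · subst hwi
      have hiff := decide_eq_decide.mp h1
      rcases hu.2.1 with hc | hc
      · have hnP : ¬ (x w = y (Fin.last (s'+1)) + a) := by
          rw [hc]; exact Ne.symm (add_ne_self ha)
        have hnQ := (not_iff_not.mpr hiff).mp hnP
        have hcv := hv.2.1.resolve_right hnQ
        rw [hc, hcv, hqeq]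
      · have hQ := hiff.mp hc
        rw [hc, hQ, hqeq]
    · by_cases hwi' : w = i'
      · subst hwi'
        have hiff := decide_eq_decide.mp h2
        rcases hu.2.2 with hc | hc
        · have hnP : ¬ (x w = y (Fin.last (s'+1)) + a + b) := by
            rw [hc]
            intro hh
            apply add_ne_self (g := y (Fin.last (s'+1)) + b) ha
            rw [add_right_comm] at hh
            exact hh.symm
          have hnQ := (not_iff_not.mpr hiff).mp hnP
          have hcv := hv.2.2.resolve_right hnQ
          rw [hc, hcv, hqeq]
        · have hQ := hiff.mp hc
          rw [hc, hQ, hqeq]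
      · obtain ⟨u, hu1⟩ := Fin.exists_succAbove_eq (show w ≠ i from hwi)
        have hui2 : u ≠ i2 := by
          intro hh
          rw [hh, hi2] at hu1
          exact hwi' hu1.symm
        obtain ⟨k, hk⟩ := Fin.exists_succAbove_eq hui2
        have := congrFun h3 k
        rw [hk] at this
        rw [hu1] at this
        exact this

lemma key0 {n : ℕ} (a b : Gn n) (ha : a ≠ 0) (hb : b ≠ 0) (hab : a ≠ b) (r s' : ℕ) :
    cnt n r (s'+2) a b ≤ (s'+1) * (2^n * (2 * cnt n r s' a b))
      + (r*r - r) * (4 * cnt n (r-2) (s'+2) a b) := by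
  classical
  set T1 := (univ : Finset (Fin (s'+1))).biUnion (fun j =>
    univ.filter fun xy : (Fin r → Gn n) × (Fin (s'+2) → Gn n) =>
      Ok a b xy.1 xy.2 ∧ (xy.2 (Fin.castSucc j) = xy.2 (Fin.last (s'+1)) ∨
        xy.2 (Fin.castSucc j) = xy.2 (Fin.last (s'+1)) + b)) with hT1
  set T2 := (univ : Finset (Fin r)).offDiag.biUnion (fun q =>
    univ.filter fun xy : (Fin r → Gn n) × (Fin (s'+2) → Gn n) =>
      Ok a b xy.1 xy.2 ∧
      (xy.1 q.1 = xy.2 (Fin.last (s'+1)) ∨ xy.1 q.1 = xy.2 (Fin.last (s'+1)) + a) ∧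
      (xy.1 q.2 = xy.2 (Fin.last (s'+1)) + b ∨ xy.1 q.2 = xy.2 (Fin.last (s'+1)) + a + b)) with hT2
  have hsub : (univ.filter fun xy : (Fin r → Gn n) × (Fin (s'+2) → Gn n) =>
      Ok a b xy.1 xy.2) ⊆ T1 ∪ T2 := by
    intro xy hxy
    simp only [Finset.mem_filter, Finset.mem_univ, true_and] at hxy
    rcases cover ha hb hab xy.1 xy.2 hxy with ⟨j, hj⟩ | ⟨i, i', hii, hc1, hc2⟩
    · apply Finset.mem_union_left
      rw [hT1, Finset.mem_biUnion]
      exact ⟨j, Finset.mem_univ _, by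
        simp only [Finset.mem_filter, Finset.mem_univ, true_and]; exact ⟨hxy, hj⟩⟩
    · apply Finset.mem_union_right
      rw [hT2, Finset.mem_biUnion]
      refine ⟨(i, i'), Finset.mem_offDiag.mpr ⟨Finset.mem_univ _, Finset.mem_univ _, hii⟩, ?_⟩
      simp only [Finset.mem_filter, Finset.mem_univ, true_and]
      exact ⟨hxy, hc1, hc2⟩
  have hcT1 : T1.card ≤ (s'+1) * (2^n * (2 * cnt n r s' a b)) := by
    calc T1.card ≤ ∑ j : Fin (s'+1), (univ.filter fun xy : (Fin r → Gn n) × (Fin (s'+2) → Gn n) =>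
          Ok a b xy.1 xy.2 ∧ (xy.2 (Fin.castSucc j) = xy.2 (Fin.last (s'+1)) ∨
            xy.2 (Fin.castSucc j) = xy.2 (Fin.last (s'+1)) + b)).card :=
        Finset.card_biUnion_le
      _ ≤ ∑ _j : Fin (s'+1), 2^n * (2 * cnt n r s' a b) :=
        Finset.sum_le_sum (fun j _ => bound1 a b hb j)
      _ = (s'+1) * (2^n * (2 * cnt n r s' a b)) := by
        rw [Finset.sum_const, Finset.card_univ, Fintype.card_fin, smul_eq_mul]
  have hcT2 : T2.card ≤ (r*r - r) * (4 * cnt n (r-2) (s'+2) a b) := by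
    match r, T2, hT2 with
    | 0, T2, hT2 => subst hT2; simp
    | 1, T2, hT2 => subst hT2; simp
    | (r''+2), T2, hT2 =>
      subst hT2
      calc _ ≤ ∑ q ∈ (univ : Finset (Fin (r''+2))).offDiag,
            (univ.filter fun xy : (Fin (r''+2) → Gn n) × (Fin (s'+2) → Gn n) =>
              Ok a b xy.1 xy.2 ∧
              (xy.1 q.1 = xy.2 (Fin.last (s'+1)) ∨ xy.1 q.1 = xy.2 (Fin.last (s'+1)) + a) ∧
              (xy.1 q.2 = xy.2 (Fin.last (s'+1)) + b ∨
                xy.1 q.2 = xy.2 (Fin.last (s'+1)) + a + b)).card :=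
          Finset.card_biUnion_le
        _ ≤ ∑ _q ∈ (univ : Finset (Fin (r''+2))).offDiag, 4 * cnt n r'' (s'+2) a b := by
          apply Finset.sum_le_sum
          intro q hq
          exact bound2 a b ha q.1 q.2 (Finset.mem_offDiag.mp hq).2.2
        _ = ((r''+2)*(r''+2) - (r''+2)) * (4 * cnt n ((r''+2)-2) (s'+2) a b) := by
          rw [Finset.sum_const, smul_eq_mul, Finset.offDiag_card, Finset.card_univ,
            Fintype.card_fin]
          rfl
  calc cnt n r (s'+2) a b = _ := rfl
    _ ≤ (T1 ∪ T2).card := Finset.card_le_card hsub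
    _ ≤ T1.card + T2.card := Finset.card_union_le _ _
    _ ≤ _ := Nat.add_le_add hcT1 hcT2

theorem stmt7 (n : ℕ) (a b : Fin n → ZMod 2) (ha : a ≠ 0) (hb : b ≠ 0) (hab : a ≠ b)
    (r s : ℕ) (hs : 2 ≤ s) :
    S n a b r s ≤ 2 * ((s : ℝ) - 1) * (2 ^ n + 2 * r) * S n a b r (s - 2)
      + 4 * r * ((r : ℝ) - 1) * S n a b (r - 2) s := by
  obtain ⟨s', rfl⟩ : ∃ s', s = s' + 2 := ⟨s - 2, by omega⟩
  have hs2 : (s' + 2) - 2 = s' := by omega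
  rw [hs2, S_eq_cnt, S_eq_cnt, S_eq_cnt]
  have hk := key0 a b ha hb hab r s'
  have hC : ((cnt n r (s'+2) a b : ℕ) : ℝ) ≤
      (((s'+1) * (2^n * (2 * cnt n r s' a b)) + (r*r - r) * (4 * cnt n (r-2) (s'+2) a b) : ℕ) : ℝ) :=
    Nat.cast_le.mpr hk
  have hrr : ((r*r - r : ℕ) : ℝ) = (r:ℝ)*(r:ℝ) - (r:ℝ) := by
    have h : r ≤ r * r := by
      rcases Nat.eq_zero_or_pos r with h | h
      · simp [h]
      · exact Nat.le_mul_of_pos_left r h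
    push_cast [h]
    ring
  push_cast [hrr] at hC
  have hc1 : (0:ℝ) ≤ (cnt n r s' a b : ℝ) := by positivity
  have hc2 : (0:ℝ) ≤ (cnt n (r-2) (s'+2) a b : ℝ) := by positivity
  push_cast
  nlinarith [mul_nonneg (mul_nonneg (show (0:ℝ) ≤ (s':ℝ)+1 by positivity)
    (show (0:ℝ) ≤ 4*(r:ℝ) by positivity)) hc1]
end

section
/- For s even, S_{0,s} := E[b,...,b (s times)] satisfies S_{0,s} ≤ l^{s/2} · s!/(s/2)!, where l = 2^n and b ∈ F_2^n is nonzero. -/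
open Finset

open scoped Classical in
/-- tuples supported on `t`, with each `{v, v+b}`-class hit an even number of times within `t`. -/
noncomputable def GSet (n s : ℕ) (b : Fin n → ZMod 2) (t : Finset (Fin s)) :
    Finset (Fin s → (Fin n → ZMod 2)) :=
  Finset.univ.filter (fun x =>
    (∀ i, i ∉ t → x i = 0) ∧
    ∀ v, Even ((t.filter (fun i => x i = v)).card + (t.filter (fun i => x i = v + b)).card))

lemma vadd_self (n : ℕ) (w : Fin n → ZMod 2) : w + w = 0 := by
  funext j
  exact CharTwo.add_self_eq_zero (w j)

lemma prod_comp_count {ι α : Type} [Fintype ι] [Fintype α] [DecidableEq α] (g : α → ℝ) (x : ι → α) :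
    ∏ i, g (x i) = ∏ v, g v ^ (Finset.univ.filter (fun i => x i = v)).card := by
  have h1 : ∏ i ∈ (Finset.univ : Finset ι), g (x i)
      = ∏ v ∈ Finset.univ.image x, g v ^ (Finset.univ.filter (fun i => x i = v)).card :=
    Finset.prod_comp g x
  rw [h1]
  refine Finset.prod_subset (Finset.subset_univ _) ?_
  intro v _ hv
  have : (Finset.univ.filter (fun i => x i = v)).card = 0 := by
    rw [Finset.card_eq_zero, Finset.filter_eq_empty_iff]
    intro i _ h
    exact hv (Finset.mem_image.mpr ⟨i, Finset.mem_univ i, h⟩)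
  rw [this, pow_zero]

lemma sum_chi_pow (N : ℕ) : ∑ t : ZMod 2, ((-1:ℝ) ^ t.val) ^ N = if Even N then 2 else 0 := by
  have : (Finset.univ : Finset (ZMod 2)) = {0, 1} := by decide
  rw [this, Finset.sum_insert (by decide), Finset.sum_singleton]
  simp only [ZMod.val_zero, pow_zero, one_pow, ZMod.val_one, pow_one]
  rcases Nat.even_or_odd N with h | h
  · simp [h, Even.neg_pow h]
    norm_num
  · simp [h, h.neg_pow, Nat.not_even_iff_odd.mpr h]

open scoped Classical in
lemma ev_term (n s : ℕ) (b : Fin n → ZMod 2) (x : Fin s → (Fin n → ZMod 2)) :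
    ev n (fun f => ∏ i, (-1 : ℝ) ^ (f (x i)).val * (-1 : ℝ) ^ (f (x i + b)).val)
    = if (∀ v, Even ((Finset.univ.filter (fun i => x i = v)).card
          + (Finset.univ.filter (fun i => x i = v + b)).card)) then 1 else 0 := by
  set N : (Fin n → ZMod 2) → ℕ := fun v => (Finset.univ.filter (fun i => x i = v)).card
      + (Finset.univ.filter (fun i => x i = v + b)).card with hN
  have key : ∀ f : (Fin n → ZMod 2) → ZMod 2,
      (∏ i, (-1 : ℝ) ^ (f (x i)).val * (-1 : ℝ) ^ (f (x i + b)).val)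
      = ∏ v, ((-1:ℝ) ^ (f v).val) ^ (N v) := by
    intro f
    rw [Finset.prod_mul_distrib]
    have h1 : ∏ i, (-1:ℝ) ^ (f (x i)).val
        = ∏ v, ((-1:ℝ) ^ (f v).val) ^ (Finset.univ.filter (fun i => x i = v)).card :=
      prod_comp_count (fun v => (-1:ℝ) ^ (f v).val) x
    have h2 : ∏ i, (-1:ℝ) ^ (f (x i + b)).val
        = ∏ v, ((-1:ℝ) ^ (f v).val) ^ (Finset.univ.filter (fun i => x i + b = v)).card :=
      prod_comp_count (fun v => (-1:ℝ) ^ (f v).val) (fun i => x i + b)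
    have h3 : ∀ v : Fin n → ZMod 2, (Finset.univ.filter (fun i => x i + b = v)).card
        = (Finset.univ.filter (fun i => x i = v + b)).card := by
      intro v
      congr 1
      apply Finset.filter_congr
      intro i _
      constructor
      · intro h; rw [← h, add_assoc, vadd_self, add_zero]
      · intro h; rw [h, add_assoc, vadd_self, add_zero]
    rw [h1, h2, ← Finset.prod_mul_distrib]
    refine Finset.prod_congr rfl (fun v _ => ?_)
    rw [h3 v, ← pow_add]
  have hsum : (∑ f : (Fin n → ZMod 2) → ZMod 2, ∏ v, ((-1:ℝ) ^ (f v).val) ^ (N v))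
      = ∏ v : Fin n → ZMod 2, ∑ t : ZMod 2, ((-1:ℝ) ^ t.val) ^ (N v) := by
    rw [Finset.prod_univ_sum, ← Fintype.piFinset_univ]
  have hcardV : Fintype.card (Fin n → ZMod 2) = 2 ^ n := by
    rw [Fintype.card_fun, ZMod.card, Fintype.card_fin]
  have hcard : (Fintype.card ((Fin n → ZMod 2) → ZMod 2)) = 2 ^ (2^n) := by
    rw [Fintype.card_fun, ZMod.card, hcardV]
  rw [ev, Finset.sum_congr rfl (fun f _ => key f), hsum]
  by_cases hall : ∀ v, Even (N v)
  · rw [if_pos hall]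
    have h2 : ∀ v : Fin n → ZMod 2, (∑ t : ZMod 2, ((-1:ℝ) ^ t.val) ^ (N v)) = 2 := by
      intro v; rw [sum_chi_pow, if_pos (hall v)]
    rw [Finset.prod_congr rfl (fun v _ => h2 v), Finset.prod_const, hcard, Finset.card_univ,
      hcardV]
    push_cast
    exact div_self (by positivity)
  · rw [if_neg hall]
    push_neg at hall
    obtain ⟨v, hv⟩ := hall
    rw [Finset.prod_eq_zero (Finset.mem_univ v) (by rw [sum_chi_pow, if_neg hv]), zero_div]

lemma filter_insert_card {α : Type} [DecidableEq α] (p : α → Prop) [DecidablePred p]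
    (a : α) (s : Finset α) (ha : a ∉ s) :
    ((insert a s).filter p).card = (if p a then 1 else 0) + (s.filter p).card := by
  rw [Finset.filter_insert]
  split
  · rw [Finset.card_insert_of_notMem (fun h => ha (Finset.mem_of_mem_filter a h))]
    omega
  · omega


open scoped Classical in
lemma GSet_card_bound (n s : ℕ) (b : Fin n → ZMod 2) (hb : b ≠ 0) :
    ∀ (k : ℕ) (t : Finset (Fin s)), t.card = 2 * k →
    (GSet n s b t).card ≤ (2 ^ n * 2) ^ k * ∏ j ∈ Finset.range k, (2 * j + 1) := by
  have hwne : ∀ w : Fin n → ZMod 2, w ≠ w + b := by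
    intro w h
    apply hb
    have h2 : w + 0 = w + b := by rw [add_zero]; exact h
    exact (add_left_cancel h2).symm
  have hcancel : ∀ u v : Fin n → ZMod 2, u + b = v + b → u = v := fun u v h =>
    add_right_cancel h
  intro k
  induction k with
  | zero =>
    intro t ht
    have ht0 : t = ∅ := Finset.card_eq_zero.mp (by omega)
    subst ht0
    simp only [pow_zero, Finset.range_zero, Finset.prod_empty, mul_one]
    refine Finset.card_le_one.mpr (fun x hx y hy => ?_)
    have hx' := (Finset.mem_filter.mp hx).2.1
    have hy' := (Finset.mem_filter.mp hy).2.1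
    funext i
    rw [hx' i (Finset.notMem_empty i), hy' i (Finset.notMem_empty i)]
  | succ k ih =>
    intro t ht
    have hne : t.Nonempty := Finset.card_pos.mp (by omega)
    obtain ⟨i0, hi0⟩ := hne
    set Jset : (Fin s → (Fin n → ZMod 2)) → Finset (Fin s) :=
      fun x => (t.erase i0).filter (fun j => x j = x i0 ∨ x j = x i0 + b) with hJset
    have hJne : ∀ x ∈ GSet n s b t, (Jset x).Nonempty := by
      intro x hx
      obtain ⟨-, heven⟩ := (Finset.mem_filter.mp hx).2
      have hdisj : Disjoint (t.filter (fun i => x i = x i0))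
          (t.filter (fun i => x i = x i0 + b)) := by
        refine Finset.disjoint_filter_filter' _ _ ?_
        rintro p hp1 hp2 i hi
        exact absurd ((hp1 i hi).symm.trans (hp2 i hi)) (hwne (x i0))
      have hunion : (t.filter (fun i => x i = x i0 ∨ x i = x i0 + b)).card
          = (t.filter (fun i => x i = x i0)).card + (t.filter (fun i => x i = x i0 + b)).card := by
        rw [Finset.filter_or, Finset.card_union_of_disjoint hdisj]
      have hmem0 : i0 ∈ t.filter (fun i => x i = x i0 ∨ x i = x i0 + b) :=
        Finset.mem_filter.mpr ⟨hi0, Or.inl rfl⟩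
      have hcard2 : 1 < (t.filter (fun i => x i = x i0 ∨ x i = x i0 + b)).card := by
        have he := heven (x i0)
        rw [← hunion] at he
        have hpos : 0 < (t.filter (fun i => x i = x i0 ∨ x i = x i0 + b)).card :=
          Finset.card_pos.mpr ⟨i0, hmem0⟩
        rcases he with ⟨c, hc⟩
        omega
      obtain ⟨j, hj, hjne⟩ := Finset.exists_mem_ne hcard2 i0
      obtain ⟨hjt, hjp⟩ := Finset.mem_filter.mp hj
      exact ⟨j, Finset.mem_filter.mpr ⟨Finset.mem_erase.mpr ⟨hjne, hjt⟩, hjp⟩⟩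
    set J : (Fin s → (Fin n → ZMod 2)) → Fin s :=
      fun x => if h : (Jset x).Nonempty then h.choose else i0 with hJ
    have hJspec : ∀ x ∈ GSet n s b t, J x ∈ Jset x := by
      intro x hx
      have h := hJne x hx
      simp only [hJ, dif_pos h]
      exact h.choose_spec
    set Φ : (Fin s → (Fin n → ZMod 2)) →
        Σ _ : Fin s, ((Fin n → ZMod 2) × Bool) × (Fin s → (Fin n → ZMod 2)) :=
      fun x => ⟨J x, ((x i0, decide (x (J x) = x i0 + b)),
        Function.update (Function.update x i0 0) (J x) 0)⟩ with hΦ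
    set target : Finset (Σ _ : Fin s, ((Fin n → ZMod 2) × Bool) × (Fin s → (Fin n → ZMod 2))) :=
      (t.erase i0).sigma (fun j =>
        (Finset.univ : Finset ((Fin n → ZMod 2) × Bool))
          ×ˢ GSet n s b ((t.erase i0).erase j)) with htarget
    have hmaps : ∀ x ∈ GSet n s b t, Φ x ∈ target := by
      intro x hx
      obtain ⟨hout, heven⟩ := (Finset.mem_filter.mp hx).2
      have hJx := hJspec x hx
      obtain ⟨hJmem, hJp⟩ := Finset.mem_filter.mp hJx
      have hjne : J x ≠ i0 := (Finset.mem_erase.mp hJmem).1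
      have hjt : J x ∈ t := (Finset.mem_erase.mp hJmem).2
      have hm : Function.update (Function.update x i0 0) (J x) 0
          ∈ GSet n s b ((t.erase i0).erase (J x)) := ?_
      · exact Finset.mem_sigma.mpr ⟨hJmem, Finset.mem_product.mpr ⟨Finset.mem_univ _, hm⟩⟩
      set t'' : Finset (Fin s) := (t.erase i0).erase (J x) with ht''
      set x' : Fin s → Fin n → ZMod 2 :=
        Function.update (Function.update x i0 0) (J x) 0 with hx'd
      have hins1 : insert (J x) t'' = t.erase i0 := Finset.insert_erase hJmem
      have hins2 : insert i0 (t.erase i0) = t := Finset.insert_erase hi0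
      have htin : t = insert i0 (insert (J x) t'') := by rw [hins1, hins2]
      have hi0nm : i0 ∉ insert (J x) t'' := by
        rw [hins1]; exact Finset.notMem_erase i0 t
      have hjnm : J x ∉ t'' := Finset.notMem_erase _ _
      have hagree : ∀ i ∈ t'', x' i = x i := by
        intro i hi
        have hiJ : i ≠ J x := (Finset.mem_erase.mp hi).1
        have hii0 : i ≠ i0 := (Finset.mem_erase.mp (Finset.mem_erase.mp hi).2).1
        rw [hx'd, Function.update_of_ne hiJ, Function.update_of_ne hii0]
      refine Finset.mem_filter.mpr ⟨Finset.mem_univ _, ?_, ?_⟩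
      · intro i hi
        by_cases hiJ : i = J x
        · subst hiJ; rw [hx'd, Function.update_self]
        · by_cases hii0 : i = i0
          · subst hii0
            rw [hx'd, Function.update_of_ne hiJ, Function.update_self]
          · rw [hx'd, Function.update_of_ne hiJ, Function.update_of_ne hii0]
            refine hout i ?_
            rw [htin]
            simp only [Finset.mem_insert]
            push_neg
            exact ⟨hii0, hiJ, hi⟩
      · intro v
        have hfeq : ∀ u : Fin n → ZMod 2, (t''.filter (fun i => x' i = u))
            = (t''.filter (fun i => x i = u)) := by
          intro u
          apply Finset.filter_congr
          intro i hi
          rw [hagree i hi]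
        have cp : ∀ u : Fin n → ZMod 2, (t.filter (fun i => x i = u)).card
            = (if x i0 = u then 1 else 0) + ((if x (J x) = u then 1 else 0)
              + (t''.filter (fun i => x i = u)).card) := by
          intro u
          conv_lhs => rw [htin]
          rw [filter_insert_card _ i0 _ hi0nm, filter_insert_card _ (J x) _ hjnm]
        have hcontrib : Even ((if x i0 = v then 1 else 0) + (if x (J x) = v then 1 else 0)
            + ((if x i0 = v + b then 1 else 0) + (if x (J x) = v + b then 1 else 0))) := by
          by_cases h1 : x i0 = v
          · have h1' : ¬ (x i0 = v + b) := fun hh => hwne v (h1 ▸ hh)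
            rcases hJp with h2 | h2
            · have hxv : x (J x) = v := h2.trans h1
              have hnot : ¬ (x (J x) = v + b) := fun hh => hwne v (hxv ▸ hh)
              rw [if_pos h1, if_pos hxv, if_neg h1', if_neg hnot]; decide
            · have hxv : x (J x) = v + b := by rw [h2, h1]
              have hnot : ¬ (x (J x) = v) := fun hh => hwne v (hh.symm.trans hxv)
              rw [if_pos h1, if_neg hnot, if_neg h1', if_pos hxv]; decide
          · by_cases h2 : x i0 = v + b
            · rcases hJp with h3 | h3
              · have hxvb : x (J x) = v + b := h3.trans h2
                have hnot : ¬ (x (J x) = v) := fun hh => h1 ((h3.symm.trans hh))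
                rw [if_neg h1, if_neg hnot, if_pos h2, if_pos hxvb]; decide
              · have hxv : x (J x) = v := by
                  rw [h3, h2, add_assoc, vadd_self, add_zero]
                have hnot : ¬ (x (J x) = v + b) := fun hh => by
                  rw [hxv] at hh
                  exact hwne v hh
                rw [if_neg h1, if_pos hxv, if_pos h2, if_neg hnot]; decide
            · have hj1 : ¬ (x (J x) = v) := by
                rcases hJp with h3 | h3
                · intro hh; exact h1 (h3.symm.trans hh)
                · intro hh
                  apply h2
                  rw [← hh, h3, add_assoc, vadd_self, add_zero]
              have hj2 : ¬ (x (J x) = v + b) := by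
                rcases hJp with h3 | h3
                · intro hh; exact h2 (h3.symm.trans hh)
                · intro hh
                  rw [h3] at hh
                  exact h1 (hcancel _ _ hh)
              rw [if_neg h1, if_neg hj1, if_neg h2, if_neg hj2]; decide
        have he := heven v
        rw [cp v, cp (v + b)] at he
        rw [hfeq v, hfeq (v + b)]
        rw [Nat.even_iff] at he hcontrib ⊢
        omega
    have hinj : Set.InjOn Φ (GSet n s b t) := by
      intro x1 hx1 x2 hx2 heq
      have hJx1 := hJspec x1 hx1
      have hJx2 := hJspec x2 hx2
      obtain ⟨hJmem1, hJp1⟩ := Finset.mem_filter.mp hJx1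
      obtain ⟨hJmem2, hJp2⟩ := Finset.mem_filter.mp hJx2
      simp only [hΦ, Sigma.mk.inj_iff, heq_eq_eq, Prod.mk.injEq] at heq
      obtain ⟨hj, ⟨hv, hbit⟩, hupd⟩ := heq
      have hbit' : (x1 (J x1) = x1 i0 + b) ↔ (x2 (J x2) = x2 i0 + b) :=
        decide_eq_decide.mp hbit
      rw [← hj] at hupd hJp2 hJmem2 hbit'
      funext i
      by_cases hii0 : i = i0
      · subst hii0; exact hv
      · by_cases hiJ : i = J x1
        · subst hiJ
          by_cases hB : x1 (J x1) = x1 i0 + b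
          · rw [hB, hbit'.mp hB, hv]
          · have h1 : x1 (J x1) = x1 i0 := hJp1.resolve_right hB
            have h2 : x2 (J x1) = x2 i0 := hJp2.resolve_right (fun hh => hB (hbit'.mpr hh))
            rw [h1, h2, hv]
        · have := congrFun hupd i
          rwa [Function.update_of_ne hiJ, Function.update_of_ne hii0,
            Function.update_of_ne hiJ, Function.update_of_ne hii0] at this
    have hcard1 : (GSet n s b t).card ≤ target.card :=
      Finset.card_le_card_of_injOn Φ hmaps hinj
    have hcardVB : Fintype.card ((Fin n → ZMod 2) × Bool) = 2 ^ n * 2 := by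
      rw [Fintype.card_prod, Fintype.card_fun, ZMod.card, Fintype.card_fin, Fintype.card_bool]
    have hcarderase : (t.erase i0).card = 2 * k + 1 := by
      rw [Finset.card_erase_of_mem hi0, ht]
      omega
    have hcard2 : target.card ≤ (2 * k + 1) * ((2 ^ n * 2)
        * ((2 ^ n * 2) ^ k * ∏ j ∈ Finset.range k, (2 * j + 1))) := by
      rw [htarget, Finset.card_sigma]
      calc ∑ j ∈ t.erase i0, ((Finset.univ : Finset ((Fin n → ZMod 2) × Bool))
            ×ˢ GSet n s b ((t.erase i0).erase j)).card
          ≤ ∑ j ∈ t.erase i0, (2 ^ n * 2)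
            * ((2 ^ n * 2) ^ k * ∏ j ∈ Finset.range k, (2 * j + 1)) := by
            refine Finset.sum_le_sum (fun j hj => ?_)
            rw [Finset.card_product, Finset.card_univ, hcardVB]
            refine Nat.mul_le_mul_left _ (ih _ ?_)
            rw [Finset.card_erase_of_mem hj, hcarderase]
            omega
        _ = (2 * k + 1) * ((2 ^ n * 2)
            * ((2 ^ n * 2) ^ k * ∏ j ∈ Finset.range k, (2 * j + 1))) := by
            rw [Finset.sum_const, hcarderase, smul_eq_mul]
    calc (GSet n s b t).card ≤ (2 * k + 1) * ((2 ^ n * 2)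
          * ((2 ^ n * 2) ^ k * ∏ j ∈ Finset.range k, (2 * j + 1))) := hcard1.trans hcard2
      _ = (2 ^ n * 2) ^ (k + 1) * ∏ j ∈ Finset.range (k + 1), (2 * j + 1) := by
          rw [Finset.prod_range_succ, pow_succ]
          ring

lemma fact_identity (k : ℕ) :
    2 ^ k * Nat.factorial k * ∏ j ∈ Finset.range k, (2 * j + 1) = Nat.factorial (2 * k) := by
  induction k with
  | zero => decide
  | succ k ih =>
    have h : 2 * (k + 1) = (2 * k) + 1 + 1 := by omega
    rw [Finset.prod_range_succ, pow_succ, Nat.factorial_succ, h, Nat.factorial_succ,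
      Nat.factorial_succ, ← ih]
    ring

theorem stmt8 (n s : ℕ) (hs : Even s) (b : Fin n → ZMod 2) (hb : b ≠ 0) :
    Efun n (fun _ : Fin s => b) ≤ (2 ^ n : ℝ) ^ (s / 2) * (Nat.factorial s) / (Nat.factorial (s / 2)) := by
  classical
  obtain ⟨k, hk⟩ := hs
  have hsk : s = 2 * k := by omega
  have hdiv : s / 2 = k := by omega
  -- step 1 : Efun is a count
  have h1 : Efun n (fun _ : Fin s => b)
      = ((Finset.univ.filter (fun x : Fin s → (Fin n → ZMod 2) =>
          ∀ v, Even ((Finset.univ.filter (fun i => x i = v)).card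
            + (Finset.univ.filter (fun i => x i = v + b)).card))).card : ℝ) := by
    rw [Efun]
    rw [Finset.sum_congr rfl (fun x _ => ev_term n s b x)]
    rw [Finset.sum_boole]
  have h2 : (Finset.univ.filter (fun x : Fin s → (Fin n → ZMod 2) =>
          ∀ v, Even ((Finset.univ.filter (fun i => x i = v)).card
            + (Finset.univ.filter (fun i => x i = v + b)).card)))
      = GSet n s b Finset.univ := by
    rw [GSet]
    apply Finset.filter_congr
    intro x _
    constructor
    · intro h
      exact ⟨fun i hi => absurd (Finset.mem_univ i) hi, h⟩
    · intro h
      exact h.2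
  have h3 : (GSet n s b Finset.univ).card ≤ (2 ^ n * 2) ^ k * ∏ j ∈ Finset.range k, (2 * j + 1) :=
    GSet_card_bound n s b hb k Finset.univ (by simp [hsk])
  rw [h1, h2, hdiv]
  rw [div_eq_mul_inv, mul_comm ((2 ^ n : ℝ) ^ k * (Nat.factorial s : ℝ)), ← div_eq_inv_mul,
    le_div_iff₀ (by positivity : (0:ℝ) < (Nat.factorial k : ℝ))]
  have h4 : ((GSet n s b Finset.univ).card : ℝ) * (Nat.factorial k : ℝ)
      ≤ ((((2 ^ n * 2) ^ k * ∏ j ∈ Finset.range k, (2 * j + 1)) * Nat.factorial k : ℕ) : ℝ) := by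
    push_cast
    have hc := (Nat.cast_le (α := ℝ)).mpr h3
    push_cast at hc
    exact mul_le_mul_of_nonneg_right hc (by positivity)
  refine h4.trans ?_
  have h5 : ((2 ^ n * 2) ^ k * ∏ j ∈ Finset.range k, (2 * j + 1)) * Nat.factorial k
      = (2 ^ n) ^ k * Nat.factorial s := by
    rw [hsk, ← fact_identity k, mul_pow]
    ring
  rw [h5]
  push_cast
  exact le_refl _
end
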